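/- Let 0 < c < A. Define f : [0,1] → [0,1] by f(α) = 1 - ((A + c)/(A - c))·α for α ∈ [0, (A - c)/(2A)], and f(α) = ((A - c)/(A + c))·(1 - α) for α ∈ ((A - c)/(2A), 1]. Then for all v, v' ∈ [-c, c] with v ≠ v', letting P and Q denote the distributions on {A, -A} of the stochastic binary mechanism applied to v and v' respectively, the trade-off function satisfies T(P, Q)(α) ≥ f(α) for all α ∈ [0,1], with equality for all α when {v, v'} = {c, -c}. -/

import Mathlib

open MeasureTheory

/-- The trade-off function `T(P, Q)(α)`: the smallest achievable type II error
`1 - ∫ φ dQ` among all measurable randomized tests `φ` with values in `[0, 1]`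
and type I error `∫ φ dP ≤ α`. -/
noncomputable def tradeOff {Ω : Type*} [MeasurableSpace Ω] (P Q : Measure Ω) (α : ℝ) : ℝ :=
  sInf {β : ℝ | ∃ φ : Ω → ℝ, Measurable φ ∧ (∀ x, φ x ∈ Set.Icc (0 : ℝ) 1) ∧
    (∫ x, φ x ∂P) ≤ α ∧ β = 1 - ∫ x, φ x ∂Q}

/-- The distribution of the stochastic binary mechanism with scale `A` applied to `v`:
it outputs `A` with probability `(A + v)/(2A)` and `-A` with probability `(A - v)/(2A)`. -/
noncomputable def binMech (A v : ℝ) : Measure ℝ :=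
  (((A + v) / (2 * A)).toNNReal) • Measure.dirac A +
    (((A - v) / (2 * A)).toNNReal) • Measure.dirac (-A)

/-- The piecewise-linear lower bound trade-off function of the stochastic binary mechanism
with scale `A` and input bound `c`. -/
noncomputable def fBin (A c α : ℝ) : ℝ :=
  if α ≤ (A - c) / (2 * A) then 1 - ((A + c) / (A - c)) * α
  else ((A - c) / (A + c)) * (1 - α)

/-!
For `v, v' ∈ [-c, c]` every output probability of the binary mechanism lies in
`[(A - c)/(2A), (A + c)/(2A)]`, so `binMech A v' ≤ r • binMech A v` with `r = (A + c)/(A - c)`.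
For a test `φ` this gives `∫ φ dQ ≤ r ∫ φ dP` and `∫ (1 - φ) dP ≤ r ∫ (1 - φ) dQ`, hence the
type II error is at least `max (1 - r α) (r⁻¹ (1 - α))`, which is `fBin A c α`. For
`(v, v') = (c, -c)` this is attained by the Neyman–Pearson tests, which spend their type I budget
first on the output `-A`, where the likelihood ratio is `r`; the reflection `x ↦ -x` exchanges
`binMech A c` and `binMech A (-c)` and so handles `(v, v') = (-c, c)`.
-/

open scoped NNReal

section TradeOff

variable {Ω : Type*} [MeasurableSpace Ω] {P Q : Measure Ω}

lemma integrable_of_mem_Icc [IsFiniteMeasure P] {φ : Ω → ℝ} (hφ : Measurable φ)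
    (h01 : ∀ x, φ x ∈ Set.Icc (0 : ℝ) 1) : Integrable φ P :=
  .of_bound hφ.aestronglyMeasurable 1 <| ae_of_all _ fun x => by
    rw [Real.norm_of_nonneg (h01 x).1]; exact (h01 x).2

lemma integral_le_one_of_mem_Icc [IsProbabilityMeasure P] {φ : Ω → ℝ} (hφ : Measurable φ)
    (h01 : ∀ x, φ x ∈ Set.Icc (0 : ℝ) 1) : ∫ x, φ x ∂P ≤ 1 := by
  simpa using integral_mono (integrable_of_mem_Icc hφ h01) (integrable_const (μ := P) (1 : ℝ))
    fun x => (h01 x).2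

lemma integral_le_smul_integral_of_le_smul {r : ℝ≥0} (h : Q ≤ r • P) {f : Ω → ℝ} (hf : 0 ≤ f)
    (hfi : Integrable f P) : ∫ x, f x ∂Q ≤ r * ∫ x, f x ∂P := by
  simpa [integral_smul_nnreal_measure, NNReal.smul_def] using
    integral_mono_measure h (ae_of_all _ hf) hfi.smul_measure_nnreal

lemma tradeOff_le [IsProbabilityMeasure Q] {φ : Ω → ℝ} (hφ : Measurable φ)
    (h01 : ∀ x, φ x ∈ Set.Icc (0 : ℝ) 1) {α : ℝ} (hα : ∫ x, φ x ∂P ≤ α) :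
    tradeOff P Q α ≤ 1 - ∫ x, φ x ∂Q := by
  refine csInf_le ⟨0, ?_⟩ ⟨φ, hφ, h01, hα, rfl⟩
  rintro β ⟨ψ, hψ, h01ψ, -, rfl⟩
  linarith [integral_le_one_of_mem_Icc (P := Q) hψ h01ψ]

lemma le_tradeOff {α b : ℝ} (hα : 0 ≤ α)
    (h : ∀ φ : Ω → ℝ, Measurable φ → (∀ x, φ x ∈ Set.Icc (0 : ℝ) 1) → ∫ x, φ x ∂P ≤ α →
      b ≤ 1 - ∫ x, φ x ∂Q) :
    b ≤ tradeOff P Q α := by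
  refine le_csInf ⟨1, 0, measurable_const, fun _ => by simp, by simpa using hα, by simp⟩ ?_
  rintro β ⟨φ, hφ, h01, hφP, rfl⟩
  exact h φ hφ h01 hφP

theorem max_le_tradeOff_of_le_smul [IsProbabilityMeasure P] [IsProbabilityMeasure Q] {r : ℝ≥0}
    (hQP : Q ≤ r • P) (hPQ : P ≤ r • Q) {α : ℝ} (hα : 0 ≤ α) :
    max (1 - r * α) (r⁻¹ * (1 - α)) ≤ tradeOff P Q α := by
  refine le_tradeOff hα fun φ hφ h01 hφP => ?_
  have hQ := integral_le_smul_integral_of_le_smul hQP (fun x => (h01 x).1)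
    (integrable_of_mem_Icc hφ h01)
  have hP := integral_le_smul_integral_of_le_smul hPQ (f := fun x => 1 - φ x)
    (fun x => sub_nonneg.2 (h01 x).2) ((integrable_const 1).sub (integrable_of_mem_Icc hφ h01))
  simp only [integral_sub (integrable_const 1) (integrable_of_mem_Icc hφ h01), integral_const,
    probReal_univ, smul_eq_mul, mul_one] at hP
  have hβ : 0 ≤ 1 - ∫ x, φ x ∂Q := sub_nonneg.2 (integral_le_one_of_mem_Icc hφ h01)
  have hrα := mul_le_mul_of_nonneg_left hφP r.coe_nonneg
  refine max_le (by linarith) ?_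
  calc (r⁻¹ : ℝ) * (1 - α) ≤ r⁻¹ * (r * (1 - ∫ x, φ x ∂Q)) :=
      mul_le_mul_of_nonneg_left (by linarith) (by positivity)
    _ = (r⁻¹ * r : ℝ≥0) * (1 - ∫ x, φ x ∂Q) := by push_cast; ring
    _ ≤ 1 - ∫ x, φ x ∂Q := mul_le_of_le_one_left hβ (by exact_mod_cast inv_mul_le_one)

lemma tradeOff_map_measurableEquiv {Ω' : Type*} [MeasurableSpace Ω'] (e : Ω ≃ᵐ Ω') (α : ℝ) :
    tradeOff (P.map e) (Q.map e) α = tradeOff P Q α := by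
  unfold tradeOff
  congr 1
  ext β
  simp only [integral_map_equiv]
  constructor
  · rintro ⟨φ, hφ, h01, hP, rfl⟩
    exact ⟨φ ∘ e, hφ.comp e.measurable, fun x => h01 (e x), hP, rfl⟩
  · rintro ⟨φ, hφ, h01, hP, rfl⟩
    refine ⟨φ ∘ e.symm, hφ.comp e.symm.measurable, fun x => h01 (e.symm x), ?_, ?_⟩ <;>
      simp [hP]

end TradeOff

lemma fBin_eq_max {A c : ℝ} (hc : 0 ≤ c) (hcA : c < A) (α : ℝ) :
    fBin A c α = max (1 - (A + c) / (A - c) * α) ((A - c) / (A + c) * (1 - α)) := by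
  have hA : 0 < A := by linarith
  have hdiff : (A - c) / (A + c) * (1 - α) - (1 - (A + c) / (A - c) * α) =
      2 * c * (2 * A * α - (A - c)) / ((A - c) * (A + c)) := by
    field_simp [sub_ne_zero.2 hcA.ne', (by linarith : A + c ≠ 0)]; ring
  have hden : 0 < (A - c) * (A + c) := by apply mul_pos <;> linarith
  unfold fBin
  split_ifs with h
  · have h' : 2 * A * α ≤ A - c := by rwa [le_div_iff₀ (by positivity), mul_comm] at h
    refine (max_eq_left ?_).symm
    have : 2 * c * (2 * A * α - (A - c)) / ((A - c) * (A + c)) ≤ 0 :=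
      div_nonpos_of_nonpos_of_nonneg (mul_nonpos_of_nonneg_of_nonpos (by linarith) (by linarith))
        hden.le
    linarith
  · have h' : A - c < 2 * A * α := by
      rwa [not_le, div_lt_iff₀ (by positivity), mul_comm] at h
    refine (max_eq_right ?_).symm
    have : 0 ≤ 2 * c * (2 * A * α - (A - c)) / ((A - c) * (A + c)) := by
      apply div_nonneg _ hden.le; apply mul_nonneg <;> linarith
    linarith

section BinMech

variable {A c v v' : ℝ}

lemma integral_binMech (hv : v ∈ Set.Icc (-A) A) (φ : ℝ → ℝ) :
    ∫ x, φ x ∂binMech A v = (A + v) / (2 * A) * φ A + (A - v) / (2 * A) * φ (-A) := by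
  obtain ⟨hv₁, hv₂⟩ := hv
  have h₁ : 0 ≤ (A + v) / (2 * A) := div_nonneg (by linarith) (by linarith)
  have h₂ : 0 ≤ (A - v) / (2 * A) := div_nonneg (by linarith) (by linarith)
  rw [binMech, integral_add_measure (integrable_dirac (by simp)).smul_measure_nnreal
    (integrable_dirac (by simp)).smul_measure_nnreal]
  simp [integral_smul_nnreal_measure, NNReal.smul_def, Real.coe_toNNReal _ h₁,
    Real.coe_toNNReal _ h₂]

lemma isProbabilityMeasure_binMech (hA : 0 < A) (hv : v ∈ Set.Icc (-A) A) :
    IsProbabilityMeasure (binMech A v) := by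
  obtain ⟨hv₁, hv₂⟩ := hv
  have hsum : (A + v) / (2 * A) + (A - v) / (2 * A) = 1 := by field_simp; ring
  constructor
  simp only [binMech, Measure.add_apply, Measure.smul_apply, measure_univ, ENNReal.smul_def,
    smul_eq_mul, mul_one]
  rw [← ENNReal.coe_add, ← Real.toNNReal_add (div_nonneg (by linarith) (by linarith))
    (div_nonneg (by linarith) (by linarith)), hsum, Real.toNNReal_one, ENNReal.coe_one]

lemma binMech_map_neg : (binMech A v).map Neg.neg = binMech A (-v) := by
  rw [binMech, binMech, Measure.map_add _ _ measurable_neg, Measure.map_smul, Measure.map_smul,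
    Measure.map_dirac' measurable_neg, Measure.map_dirac' measurable_neg, neg_neg, add_comm,
    sub_neg_eq_add, ← sub_eq_add_neg]

lemma binMech_le_smul (hcA : c < A) (hv : v ∈ Set.Icc (-c) c) (hv' : v' ∈ Set.Icc (-c) c) :
    binMech A v' ≤ ((A + c) / (A - c)).toNNReal • binMech A v := by
  obtain ⟨hv₁, hv₂⟩ := hv
  obtain ⟨hv₁', hv₂'⟩ := hv'
  have hA : 0 < A := by linarith
  have hr : 0 ≤ (A + c) / (A - c) := div_nonneg (by linarith) (by linarith)
  have weight_le {w w' : ℝ} (hw : A - c ≤ w) (hw' : w' ≤ A + c) :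
      (w' / (2 * A)).toNNReal ≤ ((A + c) / (A - c)).toNNReal * (w / (2 * A)).toNNReal := by
    rw [← Real.toNNReal_mul hr]
    gcongr
    calc w' / (2 * A) ≤ (A + c) / (2 * A) := by gcongr
      _ = (A + c) / (A - c) * ((A - c) / (2 * A)) := by field_simp [sub_ne_zero.2 hcA.ne']
      _ ≤ (A + c) / (A - c) * (w / (2 * A)) := by gcongr
  rw [Measure.le_iff']
  intro s
  simp only [binMech, Measure.add_apply, Measure.smul_apply, ENNReal.smul_def, smul_eq_mul,
    mul_add, ← mul_assoc, ← ENNReal.coe_mul]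
  gcongr <;> exact weight_le (by linarith) (by linarith)

lemma tradeOff_binMech_le (hA : 0 < A) (hv : v ∈ Set.Icc (-A) A) (hv' : v' ∈ Set.Icc (-A) A)
    {a b α : ℝ} (ha : a ∈ Set.Icc (0 : ℝ) 1) (hb : b ∈ Set.Icc (0 : ℝ) 1)
    (hα : (A + v) / (2 * A) * a + (A - v) / (2 * A) * b ≤ α) :
    tradeOff (binMech A v) (binMech A v') α ≤
      1 - ((A + v') / (2 * A) * a + (A - v') / (2 * A) * b) := by
  have := isProbabilityMeasure_binMech hA hv'
  have hA' : -A ≠ A := by linarith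
  calc tradeOff (binMech A v) (binMech A v') α
      ≤ 1 - ∫ x, (if x = A then a else b) ∂binMech A v' :=
        tradeOff_le (φ := fun x => if x = A then a else b)
          (measurable_const.ite (measurableSet_singleton A) measurable_const)
          (fun x => by split_ifs <;> assumption) (by simpa [integral_binMech hv, hA'] using hα)
    _ = 1 - ((A + v') / (2 * A) * a + (A - v') / (2 * A) * b) := by
        simp [integral_binMech hv', hA']

lemma tradeOff_binMech_neg (α : ℝ) :
    tradeOff (binMech A (-v)) (binMech A (-v')) α = tradeOff (binMech A v) (binMech A v') α := by
  rw [← binMech_map_neg, ← binMech_map_neg]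
  exact tradeOff_map_measurableEquiv (MeasurableEquiv.neg ℝ) α

lemma tradeOff_binMech_le_fBin (hc : 0 ≤ c) (hcA : c < A) {α : ℝ} (hα : α ∈ Set.Icc (0 : ℝ) 1) :
    tradeOff (binMech A c) (binMech A (-c)) α ≤ fBin A c α := by
  obtain ⟨hα₀, hα₁⟩ := hα
  have hA : 0 < A := hc.trans_lt hcA
  have hAc : 0 < A - c := by linarith
  have hc_mem : c ∈ Set.Icc (-A) A := ⟨by linarith, hcA.le⟩
  have hnc_mem : -c ∈ Set.Icc (-A) A := ⟨by linarith, by linarith⟩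
  unfold fBin
  split_ifs with h
  · have h' : 2 * A * α ≤ A - c := by rwa [le_div_iff₀ (by positivity), mul_comm] at h
    convert tradeOff_binMech_le hA hc_mem hnc_mem (a := 0) (b := 2 * A * α / (A - c))
      ⟨le_rfl, zero_le_one⟩ ⟨by positivity, (div_le_one hAc).2 h'⟩ (le_of_eq ?_) using 1
    · field_simp; ring
    · field_simp; ring
  · have h' : A - c < 2 * A * α := by
      rwa [not_le, div_lt_iff₀ (by positivity), mul_comm] at h
    convert tradeOff_binMech_le hA hc_mem hnc_mem (a := (2 * A * α - (A - c)) / (A + c)) (b := 1)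
      ⟨by apply div_nonneg <;> linarith, (div_le_one (by linarith)).2 (by nlinarith)⟩
      ⟨zero_le_one, le_rfl⟩ (le_of_eq ?_) using 1
    · field_simp; ring
    · field_simp; ring

lemma fBin_le_tradeOff_binMech {α : ℝ} (hcA : c < A) (hv : v ∈ Set.Icc (-c) c)
    (hv' : v' ∈ Set.Icc (-c) c) (hα : 0 ≤ α) :
    fBin A c α ≤ tradeOff (binMech A v) (binMech A v') α := by
  have hc : 0 ≤ c := by linarith [hv.1, hv.2]
  have hsub : Set.Icc (-c) c ⊆ Set.Icc (-A) A := Set.Icc_subset_Icc (by linarith) hcA.le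
  have := isProbabilityMeasure_binMech (hc.trans_lt hcA) (hsub hv)
  have := isProbabilityMeasure_binMech (hc.trans_lt hcA) (hsub hv')
  have hr : ((A + c) / (A - c)).toNNReal = ((A + c) / (A - c) : ℝ) :=
    Real.coe_toNNReal _ (div_nonneg (by linarith) (by linarith))
  simpa [fBin_eq_max hc hcA, hr, inv_div] using
    max_le_tradeOff_of_le_smul (binMech_le_smul hcA hv hv') (binMech_le_smul hcA hv' hv) hα

end BinMech

/-- For any distinct `v, v' ∈ [-c, c]`, the trade-off function of the stochastic binary
mechanism is bounded below by the piecewise-linear function `fBin A c`, with equality for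
all `α` when `{v, v'} = {c, -c}`. -/
theorem tradeOff_binMech_lower_bound (A c : ℝ) (hc : 0 < c) (hcA : c < A) :
    (∀ v ∈ Set.Icc (-c) c, ∀ v' ∈ Set.Icc (-c) c, v ≠ v' →
      ∀ α ∈ Set.Icc (0 : ℝ) 1, fBin A c α ≤ tradeOff (binMech A v) (binMech A v') α) ∧
    (∀ v v' : ℝ, ({v, v'} : Set ℝ) = ({c, -c} : Set ℝ) →
      ∀ α ∈ Set.Icc (0 : ℝ) 1, tradeOff (binMech A v) (binMech A v') α = fBin A c α) := by
  have extremal {α : ℝ} (hα : α ∈ Set.Icc (0 : ℝ) 1) :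
      tradeOff (binMech A c) (binMech A (-c)) α = fBin A c α :=
    le_antisymm (tradeOff_binMech_le_fBin hc.le hcA hα)
      (fBin_le_tradeOff_binMech hcA ⟨by linarith, le_rfl⟩ ⟨le_rfl, by linarith⟩ hα.1)
  refine ⟨fun v hv v' hv' _ α hα => fBin_le_tradeOff_binMech hcA hv hv' hα.1,
    fun v v' hvv' α hα => ?_⟩
  obtain ⟨rfl, rfl⟩ | ⟨rfl, rfl⟩ := Set.pair_eq_pair_iff.mp hvv'
  · exact extremal hα
  · rw [← tradeOff_binMech_neg, neg_neg]
    exact extremal hα
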